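/- arXiv:0704.2950 — 6 statements merged into one kernel-verified Lean document; each statement's English description precedes it below -/
import Mathlib

section
/- Let ψ : ℝⁿ → ℂ be supported in a cube Q̂ with ∫ ψ = 0 and ‖ψ‖₁ ≤ 1, let φ = |R|⁻¹ 1_R for a cube R, and let k be a kernel satisfying the Lipschitz smoothness condition |k(x,z) - k(x,c)| ≤ C |z-c|^γ / |x-c|^{n+γ} when |z-c| ≤ ½|x-c|. If the cube Q̂ has side length ℓ(Q̂) and center c, and y ∉ 3R where R, Q̂ are positioned so that |w-c| ≥ (1/3)|x-y| and |z-c| ≤ ℓ(Q̂) for all w ∈ R, z ∈ Q̂, then |∫∫ φ(w) k(w,z) ψ(z) dw dz| ≤ c_n C ℓ(Q̂)^γ / |x-y|^{n+γ}. -/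
open MeasureTheory

/-!
Subtracting `k w cQ`, which integrates to zero against the mean-zero `ψ`, turns the inner integral
into `∫ (k w z - k w cQ) ψ z dz`. On the support of `ψ` the smoothness of `k` bounds the
difference by `C ℓ^γ / (|x - y| / 3)^(n+γ)`, and `‖ψ‖₁ ≤ 1`; averaging over `R` keeps the bound.
-/

theorem norm_setAverage_le_of_norm_le {α E : Type*} [MeasurableSpace α] [NormedAddCommGroup E]
    [NormedSpace ℝ E] {μ : Measure α} {s : Set α} {f : α → E} {M : ℝ}
    (hM : 0 ≤ M) (hf : ∀ x ∈ s, ‖f x‖ ≤ M) : ‖⨍ x in s, f x ∂μ‖ ≤ M := by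
  rcases eq_top_or_lt_top (μ s) with hs | hs
  · simp [setAverage_eq, measureReal_def, hs, hM]
  rw [setAverage_eq, norm_smul, Real.norm_eq_abs, abs_inv, abs_of_nonneg measureReal_nonneg]
  calc (μ.real s)⁻¹ * ‖∫ x in s, f x ∂μ‖ ≤ (μ.real s)⁻¹ * (M * μ.real s) := by
        gcongr
        exact norm_setIntegral_le_of_norm_le_const hs hf
    _ = M * ((μ.real s)⁻¹ * μ.real s) := by ring
    _ ≤ M := mul_le_of_le_one_right hM (inv_mul_le_one_of_le₀ le_rfl measureReal_nonneg)

theorem norm_integral_mul_le_of_integral_eq_zero {α 𝕜 : Type*} [MeasurableSpace α] [RCLike 𝕜]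
    {μ : Measure α} {ψ g : α → 𝕜} {c : α} {M : ℝ} (hM : 0 ≤ M) (hψ : Integrable ψ μ)
    (hψ0 : ∫ z, ψ z ∂μ = 0) (hg : ∀ z ∈ Function.support ψ, ‖g z - g c‖ ≤ M) :
    ‖∫ z, g z * ψ z ∂μ‖ ≤ M * ∫ z, ‖ψ z‖ ∂μ := by
  by_cases hgψ : Integrable (fun z ↦ g z * ψ z) μ
  swap
  · rw [integral_undef hgψ, norm_zero]
    exact mul_nonneg hM (integral_nonneg fun _ ↦ norm_nonneg _)
  have hcancel : ∫ z, g z * ψ z ∂μ = ∫ z, (g z - g c) * ψ z ∂μ := by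
    simp_rw [sub_mul]
    rw [integral_sub hgψ (hψ.const_mul _), integral_const_mul, hψ0, mul_zero, sub_zero]
  rw [hcancel, ← integral_const_mul]
  refine norm_integral_le_of_norm_le (hψ.norm.const_mul M) (.of_forall fun z ↦ ?_)
  by_cases hz : ψ z = 0
  · simp [hz]
  rw [norm_mul]
  exact mul_le_mul_of_nonneg_right (hg z hz) (norm_nonneg _)

theorem kernel_estimate_off_3Rx_general (n : ℕ) (γ : ℝ) (hγ0 : 0 < γ) :
    ∃ c : ℝ, 0 < c ∧
      ∀ (C : ℝ) (k : (Fin n → ℝ) → (Fin n → ℝ) → ℂ)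
        (ψ : (Fin n → ℝ) → ℂ) (R : Set (Fin n → ℝ)) (x y cQ : Fin n → ℝ) (ℓ : ℝ),
        0 ≤ C → 0 < ℓ →
        MeasurableSet R → volume R ≠ 0 → volume R ≠ ⊤ →
        Integrable ψ →
        (∫ z, ψ z) = 0 →
        (∫ z, ‖ψ z‖) ≤ 1 →
        (∀ z ∈ Function.support ψ, dist z cQ ≤ ℓ) →
        (∀ w ∈ R, ∀ z ∈ Function.support ψ, dist z cQ ≤ (1/2) * dist w cQ) →
        (∀ w ∈ R, (1/3) * dist x y ≤ dist w cQ) →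
        (∀ w z : Fin n → ℝ, z ≠ cQ → dist z cQ ≤ (1/2) * dist w cQ →
          ‖k w z - k w cQ‖ ≤ C * dist z cQ ^ γ / dist w cQ ^ ((n : ℝ) + γ)) →
        0 < dist x y →
        ‖∫ w in R, (volume R).toReal⁻¹ • (∫ z, k w z * ψ z)‖
          ≤ c * C * ℓ ^ γ / dist x y ^ ((n : ℝ) + γ) := by
  refine ⟨3 ^ ((n : ℝ) + γ), by positivity, ?_⟩
  intro C k ψ R x y cQ ℓ hC hℓ _ _ _ hψ hψ0 hψ1 hsupp hhalf hthird hk hxy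
  set M := C * ℓ ^ γ / ((1 / 3) * dist x y) ^ ((n : ℝ) + γ) with hM_def
  have hM : 0 ≤ M := by positivity
  have hkernel : ∀ w ∈ R, ∀ z ∈ Function.support ψ, ‖k w z - k w cQ‖ ≤ M := by
    intro w hw z hz
    rcases eq_or_ne z cQ with rfl | hzc
    · simpa using hM
    refine (hk w z hzc (hhalf w hw z hz)).trans ?_
    rw [hM_def]
    gcongr
    exacts [hsupp z hz, hthird w hw]
  have hinner : ∀ w ∈ R, ‖∫ z, k w z * ψ z‖ ≤ M := fun w hw ↦
    (norm_integral_mul_le_of_integral_eq_zero hM hψ hψ0 (hkernel w hw)).trans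
      (mul_le_of_le_one_right hM hψ1)
  rw [integral_smul, ← measureReal_def, ← setAverage_eq]
  calc _ ≤ M := norm_setAverage_le_of_norm_le hM hinner
    _ = _ := by
      rw [hM_def, Real.mul_rpow (by norm_num) hxy.le, one_div, Real.inv_rpow (by norm_num)]
      field_simp

/-- Lemma 2.2(a), first estimate: let `ψ` be supported in a cube `Q̂` with center `cQ` and side
controlled by `ℓ`, with `∫ ψ = 0` and `∫ |ψ| ≤ 1`; let `φ = |R|⁻¹ 1_R`; let `k` be a kernel which
is `γ`-Lipschitz smooth in the second variable.  If `R` and `Q̂` are positioned so that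
`|z - cQ| ≤ ½ |w - cQ|` and `(1/3)|x-y| ≤ |w - cQ|` for `w ∈ R`, `z ∈ supp ψ`, then
`|∫∫ φ(w) k(w,z) ψ(z) dw dz| ≤ c_n C ℓ^γ / |x-y|^{n+γ}`. -/
theorem kernel_estimate_off_3Rx (n : ℕ) (γ : ℝ) (hγ0 : 0 < γ) (hγ1 : γ ≤ 1) :
    ∃ c : ℝ, 0 < c ∧
      ∀ (C : ℝ) (k : (Fin n → ℝ) → (Fin n → ℝ) → ℂ)
        (ψ : (Fin n → ℝ) → ℂ) (R : Set (Fin n → ℝ)) (x y cQ : Fin n → ℝ) (ℓ : ℝ),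
        0 ≤ C → 0 < ℓ →
        MeasurableSet R → volume R ≠ 0 → volume R ≠ ⊤ →
        Integrable ψ →
        (∫ z, ψ z) = 0 →
        (∫ z, ‖ψ z‖) ≤ 1 →
        (∀ z ∈ Function.support ψ, dist z cQ ≤ ℓ) →
        (∀ w ∈ R, ∀ z ∈ Function.support ψ, dist z cQ ≤ (1/2) * dist w cQ) →
        (∀ w ∈ R, (1/3) * dist x y ≤ dist w cQ) →
        (∀ w z : Fin n → ℝ, z ≠ cQ → dist z cQ ≤ (1/2) * dist w cQ →
          ‖k w z - k w cQ‖ ≤ C * dist z cQ ^ γ / dist w cQ ^ ((n : ℝ) + γ)) →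
        0 < dist x y →
        ‖∫ w in R, (volume R).toReal⁻¹ • (∫ z, k w z * ψ z)‖
          ≤ c * C * ℓ ^ γ / dist x y ^ ((n : ℝ) + γ) :=
  kernel_estimate_off_3Rx_general n γ hγ0
end

section
/- Let (T_k)_{k ∈ ℤ} be a family of bounded operators on a Hilbert space H with only finitely many nonzero. Suppose there is a summable sequence (α_k)_{k∈ℤ} of nonnegative reals such that max(‖T_i* T_j‖, ‖T_i T_j*‖) ≤ α_{i-j}² for all i,j. Then ‖∑_k T_k‖ ≤ ∑_k α_k. -/
/-!
Put `S = ∑ T k` and `w i j = α (i - j)`, whose row sums are at most `A = ∑ α k`; then also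
`‖T k‖ ≤ α 0 ≤ A`. Expand `(S* S)^m` into words `T i₁* T j₁ ⋯ T iₘ* T jₘ`. Bracketing a word as
`(T i₁* T j₁) ⋯ (T iₘ* T jₘ)` and as `T i₁* (T j₁ T i₂*) ⋯ (T jₘ₋₁ T iₘ*) T jₘ` gives two bounds
whose geometric mean is `A · ∏ w k k'` over consecutive indices of the path `i₁ → j₁ → ⋯ → jₘ`.
Summing over the path one index at a time gives `‖S‖^(2m) = ‖(S* S)^m‖ ≤ #κ · A^(2m)` when `m` is
a power of two, and the `2m`-th root of the number `#κ` of nonzero terms tends to `1`.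
-/

open Filter

theorem Fin.sum_univ_pi_succ {β M : Type*} [Fintype β] [AddCommMonoid M] {n : ℕ}
    (φ : (Fin (n + 1) → β) → M) :
    ∑ f, φ f = ∑ b, ∑ f : Fin n → β, φ (Fin.cons b f) := by
  rw [← Fintype.sum_prod_type']
  exact ((Fin.consEquiv fun _ => β).sum_comp φ).symm

theorem sum_pow_eq_sum_prod_map_ofFn {R β : Type*} [Semiring R] [Fintype β] (g : β → R) (n : ℕ) :
    (∑ b, g b) ^ n = ∑ f : Fin n → β, ((List.ofFn f).map g).prod := by
  induction n with
  | zero => simp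
  | succ n ih =>
    simp only [pow_succ', ih, List.map_ofFn, Finset.mul_sum, Finset.sum_mul, List.ofFn_succ,
      List.map_cons, List.prod_cons, Fin.sum_univ_pi_succ, Fin.cons_zero, Fin.cons_succ]
    exact Finset.sum_comm

theorem le_of_frequently_pow_le_mul_pow {x A C : ℝ} (hA : 0 ≤ A)
    (h : ∃ᶠ n in atTop, x ^ n ≤ C * A ^ n) : x ≤ A := by
  by_contra! hAx
  have hx : 0 < x := hA.trans_lt hAx
  have hsmall : ∀ᶠ n in atTop, C * (A / x) ^ n < 1 := by
    have := (tendsto_pow_atTop_nhds_zero_of_lt_one (div_nonneg hA hx.le)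
      ((div_lt_one hx).2 hAx)).const_mul C
    rw [mul_zero] at this
    exact this.eventually (gt_mem_nhds one_pos)
  obtain ⟨n, hle, hlt⟩ := (h.and_eventually hsmall).exists
  have : C * A ^ n < x ^ n := by
    rw [div_pow, mul_div_assoc', div_lt_one (pow_pos hx n)] at hlt
    exact hlt
  exact hle.not_gt this

theorem Summable.sum_comp_sub_le_tsum {ι : Type*} [AddGroup ι] {α : ι → ℝ} (hα0 : ∀ k, 0 ≤ α k)
    (hα : Summable α) (s : Finset ι) (i : ι) : ∑ j ∈ s, α (i - j) ≤ ∑' k, α k := by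
  rw [← (Equiv.subLeft i).tsum_eq]
  exact (hα.comp_injective (Equiv.subLeft i).injective).sum_le_tsum s fun j _ => hα0 _

namespace CotlarStein

variable {R κ : Type*}

/-- `starMulProd T [(i₁, j₁), …, (iₘ, jₘ)] = T i₁* T j₁ ⋯ T iₘ* T jₘ`. -/
def starMulProd [Monoid R] [Star R] (T : κ → R) (l : List (κ × κ)) : R :=
  (l.map fun p => star (T p.1) * T p.2).prod

def pairWeight (w : κ → κ → ℝ) (l : List (κ × κ)) : ℝ :=
  (l.map fun p => w p.1 p.2).prod

def linkWeight (w : κ → κ → ℝ) : κ → List (κ × κ) → ℝ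
  | _, [] => 1
  | j, p :: l => w j p.1 * linkWeight w p.2 l

def chainWeight (w : κ → κ → ℝ) : κ → List (κ × κ) → ℝ
  | _, [] => 1
  | j, p :: l => w j p.1 * w p.1 p.2 * chainWeight w p.2 l

theorem chainWeight_eq_linkWeight_mul_pairWeight (w : κ → κ → ℝ) (l : List (κ × κ)) (j : κ) :
    chainWeight w j l = linkWeight w j l * pairWeight w l := by
  induction l generalizing j with
  | nil => simp [chainWeight, linkWeight, pairWeight]
  | cons p l ih =>
    simp only [chainWeight, linkWeight, pairWeight, List.map_cons, List.prod_cons, ih]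
    ring

theorem chainWeight_nonneg {w : κ → κ → ℝ} (hw : ∀ i j, 0 ≤ w i j) (j : κ) (l : List (κ × κ)) :
    0 ≤ chainWeight w j l := by
  induction l generalizing j with
  | nil => exact zero_le_one
  | cons p l ih => exact mul_nonneg (mul_nonneg (hw _ _) (hw _ _)) (ih _)

section Norms

variable [NormedRing R] [StarRing R] {T : κ → R} {w : κ → κ → ℝ}

theorem starMulProd_cons (T : κ → R) (p : κ × κ) (l : List (κ × κ)) :
    starMulProd T (p :: l) = star (T p.1) * T p.2 * starMulProd T l := by
  simp [starMulProd]

theorem norm_mul_starMulProd_le_pairWeight (h : ∀ i j, ‖star (T i) * T j‖ ≤ w i j ^ 2) (x : R)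
    (l : List (κ × κ)) : ‖x * starMulProd T l‖ ≤ ‖x‖ * pairWeight w l ^ 2 := by
  induction l generalizing x with
  | nil => simp [starMulProd, pairWeight]
  | cons p l ih =>
    calc ‖x * starMulProd T (p :: l)‖ ≤ ‖x * (star (T p.1) * T p.2)‖ * pairWeight w l ^ 2 := by
          rw [starMulProd_cons, ← mul_assoc]; exact ih _
      _ ≤ ‖x‖ * w p.1 p.2 ^ 2 * pairWeight w l ^ 2 := by
          gcongr; exact (norm_mul_le _ _).trans (by gcongr; exact h _ _)
      _ = ‖x‖ * pairWeight w (p :: l) ^ 2 := by simp [pairWeight]; ring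

theorem norm_mul_starMulProd_le_linkWeight (h : ∀ i j, ‖T i * star (T j)‖ ≤ w i j ^ 2) {c : ℝ}
    (hT : ∀ k, ‖T k‖ ≤ c) (j : κ) (l : List (κ × κ)) :
    ‖T j * starMulProd T l‖ ≤ c * linkWeight w j l ^ 2 := by
  induction l generalizing j with
  | nil => simpa [starMulProd, linkWeight] using hT j
  | cons p l ih =>
    calc ‖T j * starMulProd T (p :: l)‖ ≤ ‖T j * star (T p.1)‖ * ‖T p.2 * starMulProd T l‖ := by
          rw [starMulProd_cons, mul_assoc, ← mul_assoc]; exact norm_mul_le _ _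
      _ ≤ w j p.1 ^ 2 * (c * linkWeight w p.2 l ^ 2) := by gcongr <;> apply_assumption
      _ = c * linkWeight w j (p :: l) ^ 2 := by simp only [linkWeight]; ring

theorem norm_starMulProd_cons_le [NormedStarGroup R] (hw : ∀ i j, 0 ≤ w i j)
    (h₁ : ∀ i j, ‖star (T i) * T j‖ ≤ w i j ^ 2) (h₂ : ∀ i j, ‖T i * star (T j)‖ ≤ w i j ^ 2)
    {c : ℝ} (hT : ∀ k, ‖T k‖ ≤ c) (p : κ × κ) (l : List (κ × κ)) :
    ‖starMulProd T (p :: l)‖ ≤ c * w p.1 p.2 * chainWeight w p.2 l := by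
  have hc : 0 ≤ c := (norm_nonneg _).trans (hT p.1)
  have hA : ‖starMulProd T (p :: l)‖ ≤ w p.1 p.2 ^ 2 * pairWeight w l ^ 2 := by
    rw [starMulProd_cons]
    exact (norm_mul_starMulProd_le_pairWeight h₁ _ l).trans (by gcongr; exact h₁ _ _)
  have hB : ‖starMulProd T (p :: l)‖ ≤ c * (c * linkWeight w p.2 l ^ 2) := by
    rw [starMulProd_cons, mul_assoc]
    exact (norm_mul_le _ _).trans (by
      gcongr; exacts [(norm_star _).trans_le (hT _), norm_mul_starMulProd_le_linkWeight h₂ hT _ l])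
  have hsq : ‖starMulProd T (p :: l)‖ * ‖starMulProd T (p :: l)‖
      ≤ (c * w p.1 p.2 * chainWeight w p.2 l) * (c * w p.1 p.2 * chainWeight w p.2 l) :=
    calc _ ≤ (w p.1 p.2 ^ 2 * pairWeight w l ^ 2) * (c * (c * linkWeight w p.2 l ^ 2)) :=
          mul_le_mul hA hB (norm_nonneg _) (by positivity)
      _ = _ := by rw [chainWeight_eq_linkWeight_mul_pairWeight]; ring
  exact (mul_self_le_mul_self_iff (norm_nonneg _)
    (mul_nonneg (mul_nonneg hc (hw _ _)) (chainWeight_nonneg hw _ _))).2 hsq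

end Norms

theorem sum_chainWeight_le {w : κ → κ → ℝ} [Fintype κ] (hw : ∀ i j, 0 ≤ w i j) {A : ℝ}
    (hA : ∀ i, ∑ j, w i j ≤ A) (m : ℕ) (j : κ) :
    ∑ f : Fin m → κ × κ, chainWeight w j (List.ofFn f) ≤ A ^ (2 * m) := by
  induction m generalizing j with
  | zero => simp [chainWeight]
  | succ m ih =>
    have hA0 : 0 ≤ A := (Finset.sum_nonneg fun k _ => hw j k).trans (hA j)
    calc ∑ f : Fin (m + 1) → κ × κ, chainWeight w j (List.ofFn f)
        = ∑ i, ∑ k, w j i * w i k * ∑ f : Fin m → κ × κ, chainWeight w k (List.ofFn f) := by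
          simp [Fin.sum_univ_pi_succ, List.ofFn_succ, chainWeight, Finset.mul_sum,
            Fintype.sum_prod_type]
      _ ≤ ∑ i, ∑ k, w j i * w i k * A ^ (2 * m) := by
          gcongr with i _ k _
          · exact mul_nonneg (hw _ _) (hw _ _)
          · exact ih k
      _ = ∑ i, w j i * ((∑ k, w i k) * A ^ (2 * m)) := by
          simp only [Finset.sum_mul, Finset.mul_sum, mul_assoc]
      _ ≤ ∑ i, w j i * (A * A ^ (2 * m)) := by
          gcongr with i _
          · exact hw _ _
          · exact hA i
      _ ≤ A * (A * A ^ (2 * m)) := by rw [← Finset.sum_mul]; gcongr; exact hA j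
      _ = A ^ (2 * (m + 1)) := by ring

theorem norm_star_sum_mul_sum_pow_le [NormedRing R] [StarRing R] [NormedStarGroup R] [Fintype κ]
    {T : κ → R} {w : κ → κ → ℝ} (hw : ∀ i j, 0 ≤ w i j)
    (h₁ : ∀ i j, ‖star (T i) * T j‖ ≤ w i j ^ 2) (h₂ : ∀ i j, ‖T i * star (T j)‖ ≤ w i j ^ 2)
    {A : ℝ} (hA : ∀ i, ∑ j, w i j ≤ A) {c : ℝ} (hT : ∀ k, ‖T k‖ ≤ c) (m : ℕ) :
    ‖(star (∑ i, T i) * ∑ i, T i) ^ (m + 1)‖ ≤ Fintype.card κ * c * A ^ (2 * m + 1) := by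
  have hexp : star (∑ i, T i) * ∑ i, T i = ∑ p : κ × κ, star (T p.1) * T p.2 := by
    rw [star_sum, Finset.sum_mul_sum, ← Fintype.sum_prod_type']
  rw [hexp, sum_pow_eq_sum_prod_map_ofFn]
  calc _ ≤ ∑ f : Fin (m + 1) → κ × κ, ‖starMulProd T (List.ofFn f)‖ := norm_sum_le _ _
    _ = ∑ p, ∑ f : Fin m → κ × κ, ‖starMulProd T (p :: List.ofFn f)‖ := by
        simp [Fin.sum_univ_pi_succ, List.ofFn_succ]
    _ ≤ ∑ p : κ × κ, ∑ f : Fin m → κ × κ, c * w p.1 p.2 * chainWeight w p.2 (List.ofFn f) := by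
        gcongr; exact norm_starMulProd_cons_le hw h₁ h₂ hT _ _
    _ ≤ ∑ p : κ × κ, c * w p.1 p.2 * A ^ (2 * m) := by
        simp only [← Finset.mul_sum]
        gcongr with p
        · exact mul_nonneg ((norm_nonneg _).trans (hT p.1)) (hw _ _)
        · exact sum_chainWeight_le hw hA m _
    _ = ∑ i, c * A ^ (2 * m) * ∑ j, w i j := by
        simp only [Fintype.sum_prod_type, Finset.mul_sum]
        exact Finset.sum_congr rfl fun i _ => Finset.sum_congr rfl fun j _ => by ring
    _ ≤ ∑ _i : κ, c * A ^ (2 * m) * A := by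
        gcongr with i
        · have hA0 : 0 ≤ A := (Finset.sum_nonneg fun k _ => hw i k).trans (hA i)
          exact mul_nonneg ((norm_nonneg _).trans (hT i)) (pow_nonneg hA0 _)
        · exact hA i
    _ = Fintype.card κ * c * A ^ (2 * m + 1) := by
        rw [Finset.sum_const, Finset.card_univ, nsmul_eq_mul]; ring

theorem norm_sum_le_of_almost_orthogonal [NormedRing R] [StarRing R] [CStarRing R] [Fintype κ]
    {T : κ → R} {w : κ → κ → ℝ} (hw : ∀ i j, 0 ≤ w i j)
    (h₁ : ∀ i j, ‖star (T i) * T j‖ ≤ w i j ^ 2) (h₂ : ∀ i j, ‖T i * star (T j)‖ ≤ w i j ^ 2)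
    {A : ℝ} (hA0 : 0 ≤ A) (hA : ∀ i, ∑ j, w i j ≤ A) : ‖∑ i, T i‖ ≤ A := by
  have hT : ∀ k, ‖T k‖ ≤ A := fun k =>
    calc ‖T k‖ ≤ w k k := by
          rw [mul_self_le_mul_self_iff (norm_nonneg _) (hw k k), ← CStarRing.norm_star_mul_self,
            ← sq]
          exact h₁ k k
      _ ≤ ∑ j, w k j := Finset.single_le_sum (fun j _ => hw k j) (Finset.mem_univ k)
      _ ≤ A := hA k
  set S := ∑ i, T i
  have hpow : ∀ N : ℕ, ‖S‖ ^ (2 * 2 ^ N) ≤ Fintype.card κ * A ^ (2 * 2 ^ N) := by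
    intro N
    obtain ⟨m, hm⟩ := Nat.exists_eq_add_one.2 (Nat.two_pow_pos N)
    calc ‖S‖ ^ (2 * 2 ^ N) = ‖(star S * S) ^ 2 ^ N‖ := by
          rw [(IsSelfAdjoint.star_mul_self S).norm_pow_two_pow, CStarRing.norm_star_mul_self, ← sq,
            ← pow_mul]
      _ ≤ Fintype.card κ * A * A ^ (2 * m + 1) := by
          rw [hm]; exact norm_star_sum_mul_sum_pow_le hw h₁ h₂ hA hT m
      _ = Fintype.card κ * A ^ (2 * 2 ^ N) := by rw [hm]; ring
  refine le_of_frequently_pow_le_mul_pow hA0 (frequently_atTop.2 fun N => ⟨2 * 2 ^ N, ?_, hpow N⟩)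
  have := N.lt_two_pow_self
  omega

end CotlarStein

/-- Cotlar–Stein almost orthogonality lemma: if `(T_k)_{k ∈ ℤ}` is a family of bounded operators
on a Hilbert space, with only finitely many nonzero, and if there is a summable sequence
`(α_k)` of nonnegative reals with `max ‖T_i* T_j‖ ‖T_i T_j*‖ ≤ α_{i-j}²` for all `i, j`, then
`‖∑ k, T_k‖ ≤ ∑ k, α_k`. -/
theorem cotlar_lemma {H : Type*} [NormedAddCommGroup H] [InnerProductSpace ℂ H] [CompleteSpace H]
    (T : ℤ → H →L[ℂ] H) (hfin : (Function.support T).Finite)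
    (α : ℤ → ℝ) (hα0 : ∀ k, 0 ≤ α k) (hα : Summable α)
    (hcotlar : ∀ i j : ℤ,
      max ‖ContinuousLinearMap.adjoint (T i) ∘L T j‖
          ‖T i ∘L ContinuousLinearMap.adjoint (T j)‖ ≤ (α (i - j)) ^ 2) :
    ‖∑ᶠ k, T k‖ ≤ ∑' k, α k := by
  have h₁ : ∀ i j, ‖star (T i) * T j‖ ≤ α (i - j) ^ 2 := fun i j => by
    rw [ContinuousLinearMap.star_eq_adjoint, ContinuousLinearMap.mul_def]
    exact (le_max_left _ _).trans (hcotlar i j)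
  have h₂ : ∀ i j, ‖T i * star (T j)‖ ≤ α (i - j) ^ 2 := fun i j => by
    rw [ContinuousLinearMap.star_eq_adjoint, ContinuousLinearMap.mul_def]
    exact (le_max_right _ _).trans (hcotlar i j)
  have hrow : ∀ i : hfin.toFinset, ∑ j : hfin.toFinset, α (i - j) ≤ ∑' k, α k := fun i => by
    rw [Finset.sum_coe_sort hfin.toFinset (fun j => α (i - j))]
    exact hα.sum_comp_sub_le_tsum hα0 _ _
  have hsum := CotlarStein.norm_sum_le_of_almost_orthogonal (T := fun k : hfin.toFinset => T k)
    (w := fun i j => α (i - j)) (fun _ _ => hα0 _) (fun i j => h₁ i j) (fun i j => h₂ i j)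
    (tsum_nonneg hα0) hrow
  rwa [finsum_eq_sum T hfin, ← Finset.sum_coe_sort]
end

section
/- Let Ψ : ℝ → ℂ satisfy |Ψ(x)| ≤ C min{1, |x|⁻²} for all x, and set Ψ_k(x) = 2^k Ψ(2^k x) for k ∈ ℤ. Then (∑_{k∈ℤ} |Ψ_k(x)|²)^{1/2} ≤ c·C / |x| for all x ≠ 0, where c is an absolute constant. -/
/-!
With `t = 2^k |x|`, the decay of `Ψ` gives `2^k ‖Ψ(2^k x)‖ ≤ (C/|x|) · min(t, t⁻¹)`. Taking
`n = ⌊log₂ |x|⌋`, so that `2^(k+n) ≤ t < 2^(k+n+1)`, this is at most `(2C/|x|) · 2^(-|k+n|)`.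
The squares are therefore dominated by `4 (C/|x|)²` times a two-sided geometric series of
ratio `1/4`, whose sum is `5/3`; since `4 · 5/3 ≤ 3²`, the constant `c = 3` works.
-/

lemma hasSum_pow_natAbs {r : ℝ} (h0 : 0 ≤ r) (h1 : r < 1) :
    HasSum (fun m : ℤ => r ^ m.natAbs) ((1 + r) / (1 - r)) := by
  have h : HasSum (fun n : ℕ => r ^ n) (1 - r)⁻¹ := hasSum_geometric_of_lt_one h0 h1
  have hsum := HasSum.of_nat_of_neg (f := fun m : ℤ => r ^ m.natAbs) (by simpa using h)
    (by simpa using h)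
  have hr : 1 - r ≠ 0 := by linarith
  rwa [Int.natAbs_zero, pow_zero, ← two_mul, ← div_eq_mul_inv,
    show 2 / (1 - r) - 1 = (1 + r) / (1 - r) by field_simp; ring] at hsum

lemma tsum_le_of_le_mul_pow_natAbs_add {f : ℤ → ℝ} {A r : ℝ} (n : ℤ) (hf : ∀ k, 0 ≤ f k)
    (h0 : 0 ≤ r) (h1 : r < 1) (hle : ∀ k, f k ≤ A * r ^ (k + n).natAbs) :
    ∑' k, f k ≤ A * ((1 + r) / (1 - r)) := by
  have hg : HasSum (fun k : ℤ => A * r ^ (k + n).natAbs) (A * ((1 + r) / (1 - r))) :=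
    ((Equiv.addRight n).hasSum_iff.mpr (hasSum_pow_natAbs h0 h1)).mul_left A
  exact hasSum_le hle (hg.summable.of_nonneg_of_le hf hle).hasSum hg

lemma min_self_inv_le_mul_inv_pow_natAbs {b t : ℝ} {m : ℤ} (hb : 1 < b) (hm : b ^ m ≤ t)
    (ht : t < b ^ (m + 1)) : min t t⁻¹ ≤ b * b⁻¹ ^ m.natAbs := by
  have hb0 : 0 < b := by linarith
  rcases le_or_gt 0 m with hm0 | hm0
  · calc min t t⁻¹ ≤ t⁻¹ := min_le_right _ _
      _ ≤ (b ^ m)⁻¹ := inv_anti₀ (by positivity) hm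
      _ = b⁻¹ ^ m.natAbs := by
        rw [inv_pow, ← zpow_natCast, Int.natAbs_of_nonneg hm0]
      _ ≤ b * b⁻¹ ^ m.natAbs := le_mul_of_one_le_left (by positivity) hb.le
  · calc min t t⁻¹ ≤ t := min_le_left _ _
      _ ≤ b ^ (m + 1) := ht.le
      _ = b * b⁻¹ ^ m.natAbs := by
        rw [zpow_add_one₀ hb0.ne', mul_comm, inv_pow, ← zpow_natCast,
          Int.ofNat_natAbs_of_nonpos hm0.le, zpow_neg, inv_inv]

lemma mul_min_one_inv_sq {t : ℝ} (ht : 0 < t) : t * min 1 (t ^ 2)⁻¹ = min t t⁻¹ := by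
  rw [mul_min_of_nonneg _ _ ht.le, mul_one, pow_two, mul_inv, ← mul_assoc,
    mul_inv_cancel₀ ht.ne', one_mul]

lemma zpow_mul_norm_dilate_le {Ψ : ℝ → ℂ} {C : ℝ}
    (hΨ : ∀ x : ℝ, ‖Ψ x‖ ≤ C * min 1 (|x| ^ 2)⁻¹)
    (k : ℤ) {x : ℝ} (hx : x ≠ 0) :
    (2 : ℝ) ^ k * ‖Ψ ((2 : ℝ) ^ k * x)‖ ≤ C / |x| * min (2 ^ k * |x|) (2 ^ k * |x|)⁻¹ := by
  have ht : 0 < (2 : ℝ) ^ k * |x| := by positivity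
  calc (2 : ℝ) ^ k * ‖Ψ ((2 : ℝ) ^ k * x)‖
      ≤ 2 ^ k * (C * min 1 ((2 ^ k * |x|) ^ 2)⁻¹) := by
        gcongr
        simpa [abs_mul] using hΨ (2 ^ k * x)
    _ = C / |x| * ((2 ^ k * |x|) * min 1 ((2 ^ k * |x|) ^ 2)⁻¹) := by
        field_simp
    _ = C / |x| * min (2 ^ k * |x|) (2 ^ k * |x|)⁻¹ := by rw [mul_min_one_inv_sq ht]

lemma sq_zpow_mul_norm_dilate_le {Ψ : ℝ → ℂ} {C : ℝ}
    (hΨ : ∀ x : ℝ, ‖Ψ x‖ ≤ C * min 1 (|x| ^ 2)⁻¹)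
    (k : ℤ) {x : ℝ} (hx : x ≠ 0) :
    ((2 : ℝ) ^ k * ‖Ψ ((2 : ℝ) ^ k * x)‖) ^ 2
      ≤ 4 * (C / |x|) ^ 2 * 4⁻¹ ^ (k + Int.log 2 |x|).natAbs := by
  have hC : 0 ≤ C := by simpa using (norm_nonneg _).trans (hΨ 1)
  have hx' : 0 < |x| := abs_pos.mpr hx
  have hlow : (2 : ℝ) ^ (k + Int.log 2 |x|) ≤ 2 ^ k * |x| := by
    rw [zpow_add₀ two_ne_zero]
    gcongr
    exact Int.zpow_log_le_self one_lt_two hx'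
  have hup : 2 ^ k * |x| < (2 : ℝ) ^ (k + Int.log 2 |x| + 1) := by
    rw [add_assoc, zpow_add₀ two_ne_zero]
    gcongr
    exact Int.lt_zpow_succ_log_self one_lt_two _
  calc ((2 : ℝ) ^ k * ‖Ψ ((2 : ℝ) ^ k * x)‖) ^ 2
      ≤ (C / |x| * (2 * 2⁻¹ ^ (k + Int.log 2 |x|).natAbs)) ^ 2 := by
        refine pow_le_pow_left₀ (by positivity) ((zpow_mul_norm_dilate_le hΨ k hx).trans ?_) 2
        gcongr
        exact min_self_inv_le_mul_inv_pow_natAbs one_lt_two hlow hup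
    _ = 4 * (C / |x|) ^ 2 * 4⁻¹ ^ (k + Int.log 2 |x|).natAbs := by
        rw [mul_pow, mul_pow, ← pow_mul, mul_comm _ 2, pow_mul]
        norm_num
        ring

/-- Size estimate for the square function of a Littlewood–Paley family: if
`|Ψ(x)| ≤ C·min{1, |x|⁻²}` and `Ψ_k(x) = 2^k Ψ(2^k x)`, then
`(∑_{k∈ℤ} |Ψ_k(x)|²)^{1/2} ≤ c·C/|x|` for all `x ≠ 0`, with `c` an absolute constant. -/
theorem squarefunction_size_estimate :
    ∃ c : ℝ, 0 < c ∧
      ∀ (Ψ : ℝ → ℂ) (C : ℝ),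
        (∀ x : ℝ, ‖Ψ x‖ ≤ C * min 1 (|x| ^ 2)⁻¹) →
        ∀ x : ℝ, x ≠ 0 →
          (∑' k : ℤ, ((2 : ℝ) ^ k * ‖Ψ ((2 : ℝ) ^ k * x)‖) ^ 2) ^ ((1 : ℝ)/2)
            ≤ c * C / |x| := by
  refine ⟨3, by norm_num, fun Ψ C hΨ x hx => ?_⟩
  have hC : 0 ≤ C := by simpa using (norm_nonneg _).trans (hΨ 1)
  have hsum := tsum_le_of_le_mul_pow_natAbs_add (Int.log 2 |x|) (fun k => sq_nonneg _)
    (by norm_num) (by norm_num) (sq_zpow_mul_norm_dilate_le hΨ · hx)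
  rw [← Real.sqrt_eq_rpow, Real.sqrt_le_left (by positivity)]
  calc _ ≤ _ := hsum
    _ ≤ 9 * (C / |x|) ^ 2 := by norm_num; nlinarith [sq_nonneg (C / |x|)]
    _ = (3 * C / |x|) ^ 2 := by ring
end

section
/- In the algebra of m×m complex matrices with the normalized Schatten p-norm (standard trace), let f = ∑_{k=2}^m e_{1k} and consider the martingale-transform-type map sending f to ∑_{k=2}^m e_{k1} e_{1k} = ∑_{k=2}^m e_{kk}. Then for 1 < p < 2, ‖∑_{k=2}^m e_{kk}‖_p = (m-1)^{1/p} while ‖∑_{k=2}^m e_{1k}‖_p = (m-1)^{1/2}; hence the ratio (m-1)^{1/p - 1/2} tends to infinity as m → ∞. -/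
/-!
For both matrices `a` in question, `a * aᴴ * a = c • a`, so `aᴴ * a` squares to
`c • (aᴴ * a)` and its eigenvalues lie in `{0, c}`. Hence
`tr |a|^p = ∑ λᵢ^{p/2} = c^{p/2 - 1} tr (aᴴ * a)`. For the diagonal projection `∑ e_kk` one has
`c = 1`, and for the row `f = ∑ e_1k` one has `c = m - 1`, because `f fᴴ = (m - 1) e_11`; in both
cases `tr (aᴴ * a) = m - 1`.
-/

open scoped BigOperators

/-- The Schatten `p`-norm of a matrix with respect to the standard trace:
`‖a‖_p = tr(|a|^p)^{1/p} = (∑ᵢ λᵢ(aᴴa)^{p/2})^{1/p}`. -/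
noncomputable def schattenNorm {d : ℕ} (p : ℝ) (a : Matrix (Fin d) (Fin d) ℂ) : ℝ :=
  (∑ i, ((Matrix.isHermitian_conjTranspose_mul_self a).eigenvalues i) ^ (p / 2)) ^ (1 / p)

open Matrix Finset

namespace Matrix.IsHermitian

variable {𝕜 n : Type*} [RCLike 𝕜] [Fintype n] [DecidableEq n] {A : Matrix n n 𝕜}

lemma eigenvalues_mul_self_of_mul_self_eq_smul (hA : A.IsHermitian) {c : ℝ}
    (h : A * A = (c : 𝕜) • A) (i : n) :
    hA.eigenvalues i * hA.eigenvalues i = c * hA.eigenvalues i := by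
  set v := ⇑(hA.eigenvectorBasis i)
  have hv : v ≠ 0 := fun hv0 => hA.eigenvectorBasis.orthonormal.ne_zero i (by simpa [v] using hv0)
  have hAv := hA.mulVec_eigenvectorBasis i
  refine smul_left_injective ℝ hv ?_
  calc (hA.eigenvalues i * hA.eigenvalues i) • v = A *ᵥ (A *ᵥ v) := by
        rw [hAv, mulVec_smul, hAv, smul_smul]
    _ = (c * hA.eigenvalues i) • v := by
        rw [mulVec_mulVec, h, smul_mulVec, hAv, ← RCLike.real_smul_eq_coe_smul (K := 𝕜) c,
          smul_smul]

lemma sum_eigenvalues_rpow_of_mul_self_eq_smul (hA : A.IsHermitian) {c : ℝ} (hc : c ≠ 0)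
    (h : A * A = (c : 𝕜) • A) {q : ℝ} (hq : q ≠ 0) :
    ∑ i, hA.eigenvalues i ^ q = c ^ (q - 1) * ∑ i, hA.eigenvalues i := by
  rw [Finset.mul_sum]
  refine Finset.sum_congr rfl fun i _ => ?_
  have hi : hA.eigenvalues i * (hA.eigenvalues i - c) = 0 := by
    linear_combination hA.eigenvalues_mul_self_of_mul_self_eq_smul h i
  rcases mul_eq_zero.mp hi with h0 | hc'
  · rw [h0, Real.zero_rpow hq, mul_zero]
  · rw [sub_eq_zero.mp hc', Real.rpow_sub_one hc, div_mul_cancel₀ _ hc]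

end Matrix.IsHermitian

lemma schattenNorm_eq_of_mul_conjTranspose_mul_eq_smul {d : ℕ} {p : ℝ} (hp : 0 < p)
    {a : Matrix (Fin d) (Fin d) ℂ} {c t : ℝ} (hc : c ≠ 0)
    (ha : a * aᴴ * a = (c : ℂ) • a) (htr : (aᴴ * a).trace = t) :
    schattenNorm p a = (c ^ (p / 2 - 1) * t) ^ (1 / p) := by
  have hA := isHermitian_conjTranspose_mul_self a
  have hsq : aᴴ * a * (aᴴ * a) = (c : ℂ) • (aᴴ * a) := by
    rw [show aᴴ * a * (aᴴ * a) = aᴴ * (a * aᴴ * a) by simp only [mul_assoc], ha,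
      mul_smul_comm]
  have hsum : ∑ i, hA.eigenvalues i = t := by
    apply Complex.ofReal_injective
    push_cast
    exact hA.trace_eq_sum_eigenvalues.symm.trans htr
  rw [schattenNorm, hA.sum_eigenvalues_rpow_of_mul_self_eq_smul hc hsq (by positivity), hsum]

lemma sum_single_mul_sum_single {n α : Type*} [Fintype n] [DecidableEq n] [Semiring α]
    (s : Finset n) (r c : n → n) (x y : α) :
    (∑ k ∈ s, single (r k) k x) * (∑ l ∈ s, single l (c l) y) =
      ∑ k ∈ s, single (r k) (c k) (x * y) := by
  rw [Finset.sum_mul_sum]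
  refine Finset.sum_congr rfl fun k hk => ?_
  rw [Finset.sum_eq_single_of_mem k hk fun l _ hlk =>
    single_mul_single_of_ne _ _ _ _ (Ne.symm hlk) _, single_mul_single_same]

lemma schattenNorm_sum_single_self {d : ℕ} {p : ℝ} (hp : 0 < p) (s : Finset (Fin d)) :
    schattenNorm p (∑ k ∈ s, single k k (1 : ℂ)) = (#s : ℝ) ^ (1 / p) := by
  set P := ∑ k ∈ s, single k k (1 : ℂ)
  have hPh : Pᴴ = P := by simp [P, conjTranspose_sum]
  have hPP : P * P = P := by simpa using sum_single_mul_sum_single s id id (1 : ℂ) 1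
  have htr : (Pᴴ * P).trace = (#s : ℝ) := by simp [hPh, hPP, P, trace_sum]
  have hP : P * Pᴴ * P = ((1 : ℝ) : ℂ) • P := by
    rw [hPh, hPP, hPP, Complex.ofReal_one, one_smul]
  rw [schattenNorm_eq_of_mul_conjTranspose_mul_eq_smul hp one_ne_zero hP htr, Real.one_rpow,
    one_mul]

lemma schattenNorm_sum_single_row {d : ℕ} {p : ℝ} (hp : 0 < p) (i : Fin d) {s : Finset (Fin d)}
    (hs : s.Nonempty) :
    schattenNorm p (∑ k ∈ s, single i k (1 : ℂ)) = (#s : ℝ) ^ (1 / 2 : ℝ) := by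
  set f := ∑ k ∈ s, single i k (1 : ℂ)
  have hfh : fᴴ = ∑ k ∈ s, single k i (1 : ℂ) := by simp [f, conjTranspose_sum]
  have hffh : f * fᴴ = (#s : ℂ) • single i i 1 := by
    rw [hfh, sum_single_mul_sum_single s (fun _ => i) (fun _ => i)]
    simp
  have hf : f * fᴴ * f = ((#s : ℝ) : ℂ) • f := by
    rw [hffh, smul_mul_assoc, Matrix.mul_sum]
    simp [f]
  have htr : (fᴴ * f).trace = (#s : ℝ) := by
    rw [trace_mul_comm, hffh]
    simp
  have hcard : (0 : ℝ) < #s := by exact_mod_cast hs.card_pos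
  rw [schattenNorm_eq_of_mul_conjTranspose_mul_eq_smul hp hcard.ne' hf htr,
    ← Real.rpow_add_one hcard.ne', ← Real.rpow_mul hcard.le]
  congr 1
  field_simp
  ring

/-- The matrix counterexample of Section 7: for `f = ∑_{k=2}^m e_{1k}` the martingale-transform
type map `f ↦ ∑_{k=2}^m e_{k1} e_{1k} = ∑_{k=2}^m e_{kk}` satisfies, for `1 < p < 2`,
`‖∑ e_{kk}‖_p = (m-1)^{1/p}` while `‖∑ e_{1k}‖_p = (m-1)^{1/2}`; hence the ratio
`(m-1)^{1/p - 1/2}` tends to infinity as `m → ∞`. -/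
theorem martingale_transform_counterexample (p : ℝ) (hp1 : 1 < p) (hp2 : p < 2) :
    (∀ (m : ℕ) (hm : 2 ≤ m),
      schattenNorm p (∑ k ∈ Finset.univ.erase (⟨0, by omega⟩ : Fin m),
          Matrix.single k k (1 : ℂ)) = ((m : ℝ) - 1) ^ (1 / p) ∧
      schattenNorm p (∑ k ∈ Finset.univ.erase (⟨0, by omega⟩ : Fin m),
          Matrix.single (⟨0, by omega⟩ : Fin m) k (1 : ℂ))
        = ((m : ℝ) - 1) ^ ((1 : ℝ) / 2)) ∧
    Filter.Tendsto (fun m : ℕ => ((m : ℝ) - 1) ^ (1 / p - 1 / 2))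
      Filter.atTop Filter.atTop := by
  have hp : 0 < p := by linarith
  refine ⟨fun m hm => ?_, ?_⟩
  · have hcard : (#(univ.erase (⟨0, by omega⟩ : Fin m)) : ℝ) = m - 1 := by
      rw [card_erase_of_mem (mem_univ _), card_univ, Fintype.card_fin, Nat.cast_sub (by omega),
        Nat.cast_one]
    rw [schattenNorm_sum_single_self hp, schattenNorm_sum_single_row hp _ ⟨⟨1, hm⟩, by simp⟩,
      hcard]
    exact ⟨rfl, rfl⟩
  · have hexp : 0 < 1 / p - 1 / 2 := by
      have := one_div_lt_one_div_of_lt hp hp2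
      linarith
    exact (tendsto_rpow_atTop hexp).comp
      (Filter.tendsto_atTop_add_const_right _ (-1) tendsto_natCast_atTop_atTop)
end

section
/- Let T be an L²-bounded operator with ‖T‖_{B(L²)} ≤ 1 whose kernel satisfies |k(x,y)| ≤ C|x-y|^{-n}. Then for any x₀ ∈ ℝⁿ and radii r₂ > 2r₁ > 0, and any bounded functions f, g supported in the balls B_{r₁}(x₀) and B_{r₂}(x₀) respectively, |⟨Tf, g⟩| ≤ c_n (1+C) r₁ⁿ log(r₂/r₁) ‖f‖_∞ ‖g‖_∞. -/
/-!
Split the pairing at the ball `B = B_{2r₁}(x₀)`. On `B`, Cauchy–Schwarz and `‖Tf‖₂ ≤ ‖f‖₂` bound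
it by `|B| ‖f‖_∞ ‖g‖_∞ ≈ r₁ⁿ ‖f‖_∞ ‖g‖_∞`. Off `B`, `x` is outside the support of `f`, so the
kernel representation applies, and `|x - y| ≥ |x - x₀| / 2` for `y ∈ supp f` gives
`|Tf(x)| ≲ C r₁ⁿ ‖f‖_∞ |x - x₀|⁻ⁿ`. Integrating `|x - x₀|⁻ⁿ` over the annulus
`2r₁ < |x - x₀| ≤ r₂` in polar coordinates produces `n 2ⁿ log (r₂ / 2r₁)`. Finally the near term
is absorbed into the logarithm because `log (r₂ / r₁) ≥ log 2`.
-/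

open MeasureTheory Metric Set
open scoped ENNReal

lemma eLpNorm_le_of_support_subset {α E : Type*} [MeasurableSpace α] [NormedAddCommGroup E]
    {μ : Measure α} {f : α → E} {s : Set α} {M : ℝ} {p : ℝ≥0∞} (hf : ∀ x, ‖f x‖ ≤ M)
    (hsf : f.support ⊆ s) :
    eLpNorm f p μ ≤ μ s ^ p.toReal⁻¹ * ENNReal.ofReal M := by
  rw [← eLpNorm_restrict_eq_of_support_subset hsf, ← Measure.restrict_apply_univ]
  exact eLpNorm_le_of_ae_bound (.of_forall hf)

lemma setLIntegral_enorm_mul_conj_le {α : Type*} [MeasurableSpace α] {μ : Measure α}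
    {F f g : α → ℂ} {A : Set α} {Mf Mg : ℝ}
    (hFm : AEStronglyMeasurable F μ) (hgm : AEStronglyMeasurable g μ)
    (hFf : eLpNorm F 2 μ ≤ eLpNorm f 2 μ) (hf : ∀ x, ‖f x‖ ≤ Mf) (hg : ∀ x, ‖g x‖ ≤ Mg)
    (hsf : f.support ⊆ A) :
    ∫⁻ x in A, ‖F x * starRingEnd ℂ (g x)‖ₑ ∂μ ≤ μ A * (ENNReal.ofReal Mf * ENNReal.ofReal Mg) := by
  have hHolder : eLpNorm (fun x => F x * starRingEnd ℂ (g x)) 1 (μ.restrict A)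
      ≤ 1 * eLpNorm F 2 (μ.restrict A) * eLpNorm g 2 (μ.restrict A) :=
    eLpNorm_le_eLpNorm_mul_eLpNorm'_of_norm hFm.restrict hgm.restrict
      (fun a z => a * starRingEnd ℂ z) 1 (.of_forall fun x => by simp)
  calc ∫⁻ x in A, ‖F x * starRingEnd ℂ (g x)‖ₑ ∂μ
      ≤ eLpNorm F 2 (μ.restrict A) * eLpNorm g 2 (μ.restrict A) := by
        simpa [eLpNorm_one_eq_lintegral_enorm] using hHolder
    _ ≤ eLpNorm f 2 μ * eLpNorm g 2 (μ.restrict A) := by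
        gcongr
        exact (eLpNorm_mono_measure F Measure.restrict_le_self).trans hFf
    _ ≤ (μ A ^ (2 : ℝ≥0∞).toReal⁻¹ * ENNReal.ofReal Mf)
          * ((μ.restrict A) univ ^ (2 : ℝ≥0∞).toReal⁻¹ * ENNReal.ofReal Mg) := by
        gcongr
        · exact eLpNorm_le_of_support_subset hf hsf
        · exact eLpNorm_le_of_ae_bound (.of_forall hg)
    _ = μ A * (ENNReal.ofReal Mf * ENNReal.ofReal Mg) := by
        rw [Measure.restrict_apply_univ, mul_mul_mul_comm,
          ← ENNReal.rpow_add_of_nonneg _ _ (by norm_num) (by norm_num)]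
        norm_num

lemma norm_le_two_pow_mul_div_of_lt_dist {X : Type*} [PseudoMetricSpace X] {k : X → X → ℂ}
    {n : ℕ} {C r : ℝ} {x x₀ y : X} (hC : 0 ≤ C)
    (hk : ∀ x y, x ≠ y → ‖k x y‖ ≤ C / dist x y ^ n)
    (hx : 2 * r < dist x x₀) (hy : y ∈ closedBall x₀ r) :
    ‖k x y‖ ≤ 2 ^ n * C / dist x x₀ ^ n := by
  have hy' : dist x x₀ / 2 ≤ dist x y := by
    linarith [dist_triangle x y x₀, mem_closedBall.mp hy]
  have hd : 0 < dist x x₀ / 2 := by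
    linarith [mem_closedBall.mp hy, dist_nonneg (x := y) (y := x₀)]
  have hxy : x ≠ y := by
    rintro rfl
    linarith [dist_self x]
  calc ‖k x y‖ ≤ C / dist x y ^ n := hk x y hxy
    _ ≤ C / (dist x x₀ / 2) ^ n := by gcongr
    _ = 2 ^ n * C / dist x x₀ ^ n := by rw [div_pow, div_div_eq_mul_div, mul_comm]

lemma norm_integral_kernel_mul_le {X : Type*} [PseudoMetricSpace X] [MeasurableSpace X]
    [OpensMeasurableSpace X] {μ : Measure X} {k : X → X → ℂ} {f : X → ℂ}
    {n : ℕ} {C M r : ℝ} {x x₀ : X} (hC : 0 ≤ C)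
    (hk : ∀ x y, x ≠ y → ‖k x y‖ ≤ C / dist x y ^ n) (hf : ∀ y, ‖f y‖ ≤ M)
    (hsf : f.support ⊆ closedBall x₀ r) (hμ : μ (closedBall x₀ r) ≠ ∞)
    (hx : 2 * r < dist x x₀) :
    ‖∫ y, k x y * f y ∂μ‖ ≤ 2 ^ n * C * M * μ.real (closedBall x₀ r) / dist x x₀ ^ n := by
  have hbound : ∀ y, ‖k x y * f y‖
      ≤ (closedBall x₀ r).indicator (fun _ => 2 ^ n * C / dist x x₀ ^ n * M) y := by
    intro y
    by_cases hy : y ∈ closedBall x₀ r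
    · rw [indicator_of_mem hy, norm_mul]
      exact mul_le_mul (norm_le_two_pow_mul_div_of_lt_dist hC hk hx hy) (hf y) (norm_nonneg _)
        (by positivity)
    · rw [indicator_of_notMem hy, Function.notMem_support.mp (fun h => hy (hsf h)), mul_zero,
        norm_zero]
  calc ‖∫ y, k x y * f y ∂μ‖
      ≤ ∫ y, (closedBall x₀ r).indicator (fun _ => 2 ^ n * C / dist x x₀ ^ n * M) y ∂μ :=
        norm_integral_le_of_norm_le
          ((integrable_indicator_iff measurableSet_closedBall).2
            (integrableOn_const hμ)) (.of_forall hbound)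
    _ = 2 ^ n * C * M * μ.real (closedBall x₀ r) / dist x x₀ ^ n := by
        rw [integral_indicator_const _ measurableSet_closedBall, smul_eq_mul]; ring

lemma norm_le_of_eq_integral_kernel_of_lt_dist {n : ℕ} {k : (Fin n → ℝ) → (Fin n → ℝ) → ℂ}
    {F f : (Fin n → ℝ) → ℂ} {C M r : ℝ} {x₀ x : Fin n → ℝ} (hC : 0 ≤ C) (hr : 0 ≤ r)
    (hF : ∀ x, x ∉ tsupport f → F x = ∫ y, k x y * f y)
    (hk : ∀ x y, x ≠ y → ‖k x y‖ ≤ C / dist x y ^ n) (hf : ∀ y, ‖f y‖ ≤ M)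
    (hsf : f.support ⊆ closedBall x₀ r) (hx : 2 * r < dist x x₀) :
    ‖F x‖ ≤ 4 ^ n * C * M * r ^ n / dist x x₀ ^ n := by
  have hxf : x ∉ tsupport f := fun h => by
    linarith [mem_closedBall.1 (closure_minimal hsf isClosed_closedBall h)]
  have hvol : volume (closedBall x₀ r) = ENNReal.ofReal ((2 * r) ^ n) := by
    rw [Real.volume_pi_closedBall _ hr, Fintype.card_fin]
  have hbound := norm_integral_kernel_mul_le hC hk hf hsf (hvol ▸ ENNReal.ofReal_ne_top) hx
  rw [measureReal_def, hvol, ENNReal.toReal_ofReal (by positivity)] at hbound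
  rw [hF x hxf]
  convert hbound using 2
  rw [mul_pow, show (4 : ℝ) ^ n = 2 ^ n * 2 ^ n by rw [← mul_pow]; norm_num]
  ring

lemma integral_annulus_inv_dist_pow {n : ℕ} (hn : 0 < n) (x₀ : Fin n → ℝ) {a b : ℝ}
    (ha : 0 < a) (hab : a ≤ b) :
    ∫ x in closedBall x₀ b \ closedBall x₀ a, (dist x x₀ ^ n)⁻¹
      = n * 2 ^ n * Real.log (b / a) := by
  have : Nonempty (Fin n) := Fin.pos_iff_nonempty.mp hn
  have hann : closedBall x₀ b \ closedBall x₀ a = (fun x => ‖x - x₀‖) ⁻¹' Ioc a b := by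
    ext x; simp [dist_eq_norm, and_comm]
  have hradial : ∫ y in Ioi (0 : ℝ), y ^ (n - 1) • (Ioc a b).indicator (fun s => (s ^ n)⁻¹) y
      = Real.log (b / a) := by
    have hIoc : Ioc a b ⊆ Ioi 0 := fun y hy => ha.trans hy.1
    rw [setIntegral_congr_fun measurableSet_Ioi (g := (Ioc a b).indicator fun y => y⁻¹)]
    · rw [setIntegral_indicator measurableSet_Ioc, inter_eq_right.2 hIoc,
        ← intervalIntegral.integral_of_le hab, integral_inv_of_pos ha (ha.trans_le hab)]
    · intro y (hy : 0 < y)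
      by_cases hy' : y ∈ Ioc a b
      · beta_reduce
        rw [indicator_of_mem hy', indicator_of_mem hy', smul_eq_mul, pow_sub₀ _ hy.ne' hn,
          pow_one]
        field_simp [hy.ne']
      · simp [indicator_of_notMem hy']
  rw [← integral_indicator (measurableSet_closedBall.diff measurableSet_closedBall), hann]
  simp_rw [dist_eq_norm]
  have hcomp : ∀ x : Fin n → ℝ, ((fun x => ‖x - x₀‖) ⁻¹' Ioc a b).indicator
      (fun x => (‖x - x₀‖ ^ n)⁻¹) x = (Ioc a b).indicator (fun s => (s ^ n)⁻¹) ‖x - x₀‖ :=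
    fun x => indicator_comp_right (g := fun s : ℝ => (s ^ n)⁻¹) (fun x => ‖x - x₀‖)
  rw [integral_congr_ae (.of_forall hcomp),
    integral_sub_right_eq_self (fun x => (Ioc a b).indicator (fun s : ℝ => (s ^ n)⁻¹) ‖x‖) x₀,
    integral_fun_norm_addHaar, Module.finrank_fin_fun, hradial, measureReal_def,
    Real.volume_pi_ball _ one_pos, ENNReal.toReal_ofReal (by positivity)]
  simp [mul_assoc]

lemma lintegral_annulus_inv_dist_pow {n : ℕ} (x₀ : Fin n → ℝ) {a b : ℝ} (ha : 0 < a)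
    (hab : a < b) :
    ∫⁻ x in closedBall x₀ b \ closedBall x₀ a, ENNReal.ofReal (dist x x₀ ^ n)⁻¹
      = ENNReal.ofReal (n * 2 ^ n * Real.log (b / a)) := by
  rcases n.eq_zero_or_pos with rfl | hn
  · have : closedBall x₀ a = univ := eq_univ_of_forall fun x => by
      simp [Subsingleton.elim x x₀, ha.le]
    simp [this]
  have hlog : 0 < Real.log (b / a) := Real.log_pos ((one_lt_div ha).2 hab)
  -- a non-integrable function has Bochner integral `0`
  have hint : IntegrableOn (fun x => (dist x x₀ ^ n)⁻¹) (closedBall x₀ b \ closedBall x₀ a) :=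
    .of_integral_ne_zero <| by rw [integral_annulus_inv_dist_pow hn x₀ ha hab.le]; positivity
  rw [← ofReal_integral_eq_lintegral_ofReal hint (.of_forall fun x => by positivity),
    integral_annulus_inv_dist_pow hn x₀ ha hab.le]

lemma setLIntegral_compl_closedBall_enorm_mul_conj_le {n : ℕ} {x₀ : Fin n → ℝ} {a b K M : ℝ}
    {F g : (Fin n → ℝ) → ℂ} (ha : 0 < a) (hab : a < b)
    (hF : ∀ x, a < dist x x₀ → ‖F x‖ ≤ K / dist x x₀ ^ n) (hg : ∀ x, ‖g x‖ ≤ M)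
    (hsg : g.support ⊆ closedBall x₀ b) :
    ∫⁻ x in (closedBall x₀ a)ᶜ, ‖F x * starRingEnd ℂ (g x)‖ₑ
      ≤ ENNReal.ofReal (K * M * (n * 2 ^ n * Real.log (b / a))) := by
  set ann := closedBall x₀ b \ closedBall x₀ a
  have hbound : ∀ x ∈ (closedBall x₀ a)ᶜ, ‖F x * starRingEnd ℂ (g x)‖ₑ
      ≤ ann.indicator (fun x => ENNReal.ofReal (K * M) * ENNReal.ofReal (dist x x₀ ^ n)⁻¹) x := by
    intro x hxa
    have hx : a < dist x x₀ := lt_of_not_ge hxa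
    by_cases hxb : x ∈ closedBall x₀ b
    · rw [indicator_of_mem (show x ∈ ann from ⟨hxb, hxa⟩), ← ENNReal.ofReal_mul' (by positivity),
        ← ofReal_norm, norm_mul, RCLike.norm_conj]
      refine ENNReal.ofReal_le_ofReal ?_
      calc ‖F x‖ * ‖g x‖ ≤ K / dist x x₀ ^ n * M :=
            mul_le_mul (hF x hx) (hg x) (norm_nonneg _) ((norm_nonneg _).trans (hF x hx))
        _ = K * M * (dist x x₀ ^ n)⁻¹ := by ring
    · rw [Function.notMem_support.mp (fun h => hxb (hsg h))]
      simp
  calc ∫⁻ x in (closedBall x₀ a)ᶜ, ‖F x * starRingEnd ℂ (g x)‖ₑ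
      ≤ ∫⁻ x in (closedBall x₀ a)ᶜ,
          ann.indicator (fun x => ENNReal.ofReal (K * M) * ENNReal.ofReal (dist x x₀ ^ n)⁻¹) x :=
        setLIntegral_mono' measurableSet_closedBall.compl hbound
    _ ≤ ∫⁻ x in ann, ENNReal.ofReal (K * M) * ENNReal.ofReal (dist x x₀ ^ n)⁻¹ := by
        rw [← lintegral_indicator (measurableSet_closedBall.diff measurableSet_closedBall)]
        exact setLIntegral_le_lintegral _ _
    _ = ENNReal.ofReal (K * M * (n * 2 ^ n * Real.log (b / a))) := by
        have hlog : 0 ≤ Real.log (b / a) := Real.log_nonneg ((one_le_div ha).2 hab.le)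
        rw [lintegral_const_mul' _ _ ENNReal.ofReal_ne_top,
          lintegral_annulus_inv_dist_pow x₀ ha hab, ← ENNReal.ofReal_mul' (by positivity)]

lemma norm_integral_le_of_setLIntegral_le {α E : Type*} [MeasurableSpace α]
    [NormedAddCommGroup E] [NormedSpace ℝ E] {μ : Measure α} {F : α → E} {A : Set α}
    {a b : ℝ} (hA : MeasurableSet A) (ha : 0 ≤ a) (hb : 0 ≤ b)
    (hFA : ∫⁻ x in A, ‖F x‖ₑ ∂μ ≤ ENNReal.ofReal a)
    (hFAc : ∫⁻ x in Aᶜ, ‖F x‖ₑ ∂μ ≤ ENNReal.ofReal b) :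
    ‖∫ x, F x ∂μ‖ ≤ a + b := by
  have hF : ‖∫ x, F x ∂μ‖ₑ ≤ ENNReal.ofReal (a + b) := calc
    _ ≤ ∫⁻ x, ‖F x‖ₑ ∂μ := enorm_integral_le_lintegral_enorm _
    _ = _ := (lintegral_add_compl _ hA).symm
    _ ≤ _ := add_le_add hFA hFAc
    _ = _ := (ENNReal.ofReal_add ha hb).symm
  rwa [← ofReal_norm, ENNReal.ofReal_le_ofReal_iff (by positivity)] at hF

lemma four_pow_add_eight_pow_mul_log_le {n : ℕ} {C r₁ r₂ : ℝ} (hC : 0 ≤ C) (hr₁ : 0 < r₁)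
    (hr : 2 * r₁ < r₂) :
    4 ^ n + n * 8 ^ n * C * Real.log (r₂ / (2 * r₁))
      ≤ (4 ^ n / Real.log 2 + n * 8 ^ n) * (1 + C) * Real.log (r₂ / r₁) := by
  have hlog2 : 0 < Real.log 2 := Real.log_pos one_lt_two
  have hL : Real.log 2 ≤ Real.log (r₂ / r₁) :=
    Real.log_le_log two_pos ((le_div_iff₀ hr₁).2 (by linarith))
  have hL₂ : Real.log (r₂ / (2 * r₁)) ≤ Real.log (r₂ / r₁) :=
    Real.log_le_log (div_pos (by linarith) (by positivity))
      (div_le_div_of_nonneg_left (by linarith) hr₁ (by linarith))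
  have hL₂0 : 0 ≤ Real.log (r₂ / (2 * r₁)) :=
    Real.log_nonneg ((one_le_div (by positivity)).2 hr.le)
  have hnear : (4 : ℝ) ^ n ≤ 4 ^ n / Real.log 2 * ((1 + C) * Real.log (r₂ / r₁)) := by
    rw [div_mul_eq_mul_div, le_div_iff₀ hlog2]
    gcongr
    nlinarith
  have hfar : n * 8 ^ n * C * Real.log (r₂ / (2 * r₁))
      ≤ n * 8 ^ n * (1 + C) * Real.log (r₂ / r₁) := by
    gcongr
    linarith
  linarith

/-- Localization estimate (Paragraph 2.1): let `T` be `L²`-normalized (`‖T‖_{B(L²)} ≤ 1`) with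
kernel satisfying `|k(x,y)| ≤ C|x-y|^{-n}` (ℓ∞ metric).  Then for `x₀ ∈ ℝⁿ`, radii
`r₂ > 2r₁ > 0`, and bounded `f, g` supported in `B_{r₁}(x₀)` and `B_{r₂}(x₀)` respectively,
`|⟨Tf, g⟩| ≤ c_n (1+C) r₁ⁿ log(r₂/r₁) ‖f‖_∞ ‖g‖_∞`. -/
theorem localization_estimate (n : ℕ) :
    ∃ c : ℝ, 0 < c ∧
      ∀ (C : ℝ) (T : ((Fin n → ℝ) → ℂ) → ((Fin n → ℝ) → ℂ))
        (k : (Fin n → ℝ) → (Fin n → ℝ) → ℂ),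
        0 ≤ C →
        (∀ h : (Fin n → ℝ) → ℂ, eLpNorm (T h) 2 volume ≤ eLpNorm h 2 volume) →
        (∀ (h : (Fin n → ℝ) → ℂ) (x : Fin n → ℝ),
          x ∉ tsupport h → T h x = ∫ y, k x y * h y) →
        (∀ x y, x ≠ y → ‖k x y‖ ≤ C / dist x y ^ n) →
        ∀ (x₀ : Fin n → ℝ) (r₁ r₂ : ℝ), 0 < r₁ → 2 * r₁ < r₂ →
        ∀ (f g : (Fin n → ℝ) → ℂ) (Mf Mg : ℝ),
          Measurable f → Measurable g → Measurable (T f) →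
          (∀ x, ‖f x‖ ≤ Mf) → (∀ x, ‖g x‖ ≤ Mg) →
          Function.support f ⊆ Metric.closedBall x₀ r₁ →
          Function.support g ⊆ Metric.closedBall x₀ r₂ →
          ‖∫ x, T f x * (starRingEnd ℂ) (g x)‖
            ≤ c * (1 + C) * r₁ ^ n * Real.log (r₂ / r₁) * Mf * Mg := by
  refine ⟨4 ^ n / Real.log 2 + n * 8 ^ n, by positivity, ?_⟩
  intro C T k hC hT hTk hk x₀ r₁ r₂ hr₁ hr₁₂ f g Mf Mg _ hgm hTfm hMf hMg hsf hsg
  have hMf0 : 0 ≤ Mf := (norm_nonneg _).trans (hMf x₀)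
  have hMg0 : 0 ≤ Mg := (norm_nonneg _).trans (hMg x₀)
  have hlog : 0 ≤ Real.log (r₂ / (2 * r₁)) :=
    Real.log_nonneg ((one_le_div (by positivity)).2 hr₁₂.le)
  have hnear := setLIntegral_enorm_mul_conj_le (A := closedBall x₀ (2 * r₁))
    hTfm.aestronglyMeasurable hgm.aestronglyMeasurable (hT f) hMf hMg
    (hsf.trans (closedBall_subset_closedBall (by linarith)))
  rw [Real.volume_pi_closedBall _ (by positivity), Fintype.card_fin, ← ENNReal.ofReal_mul hMf0,
    ← ENNReal.ofReal_mul (by positivity)] at hnear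
  have hfar := setLIntegral_compl_closedBall_enorm_mul_conj_le (by positivity) hr₁₂
    (fun x => norm_le_of_eq_integral_kernel_of_lt_dist hC hr₁.le (hTk f) hk hMf hsf) hMg hsg
  refine (norm_integral_le_of_setLIntegral_le measurableSet_closedBall (by positivity)
    (by positivity) hnear hfar).trans ?_
  have h4 : (4 : ℝ) ^ n = 2 ^ n * 2 ^ n := by rw [← mul_pow]; norm_num
  have h8 : (8 : ℝ) ^ n = 2 ^ n * 4 ^ n := by rw [← mul_pow]; norm_num
  calc _ = (4 ^ n + n * 8 ^ n * C * Real.log (r₂ / (2 * r₁))) * (r₁ ^ n * Mf * Mg) := by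
        rw [mul_pow, h8, h4]; ring
    _ ≤ (4 ^ n / Real.log 2 + n * 8 ^ n) * (1 + C) * Real.log (r₂ / r₁) * (r₁ ^ n * Mf * Mg) := by
        gcongr
        exact four_pow_add_eight_pow_mul_log_le hC hr₁ hr₁₂
    _ = _ := by ring
end

section
/- In the 2m×2m complex matrices with filtration A_s spanned by {e_{ij} : i,j ≤ s} ∪ {e_{kk} : k > s}, let f = ∑_{i,j=1}^{2m} e_{ij} and apply Cuculescu's construction at level λ = 1. Then p_{2k-1} = 0 and p_{2k} = e_{2k-1,2k-1} + e_{2k,2k} for 1 ≤ k ≤ m, and consequently ‖∑_{k=1}^{2m} f_k p_k‖₂² = 2m(m+1) while λ‖f‖₁ = 2m, so the ratio ‖∑_k f_k p_k‖₂²/(λ‖f‖₁) = m+1 tends to infinity. -/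
/-!
For the all-ones matrix `f`, compressing `f_{2k+1}` by `q_{2k}` gives back `q_{2k}`, while
compressing `f_{2k+2}` gives `q_{2k+2} + B_k`, where `B_k` is the all-ones block on the
coordinates `2k+1, 2k+2`: twice a rank-one projection orthogonal to `q_{2k+2}`. Such a matrix has
spectrum in `{0, 1, 2}` and `χ_{(0,1]}` discards the eigenvalue `2`, so Cuculescu's projections
lose two coordinates at every even step and none at odd steps. Column `j` of `g = ∑ f_s p_s` is
then the indicator of the first `2⌈j/2⌉` rows, whence `‖g‖₂² = ∑_j 2⌈j/2⌉ = 2m(m+1)`.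
-/

open scoped BigOperators
open Matrix

/-- The spectral projection `χ_{(0,1]}(M)` of a Hermitian matrix `M` (defined as `0` on
non-Hermitian matrices). -/
noncomputable def chi01 {d : ℕ} (M : Matrix (Fin d) (Fin d) ℂ) : Matrix (Fin d) (Fin d) ℂ :=
  if h : M.IsHermitian then
    (h.eigenvectorUnitary : Matrix (Fin d) (Fin d) ℂ) *
      Matrix.diagonal (fun i => if 0 < h.eigenvalues i ∧ h.eigenvalues i ≤ 1 then (1 : ℂ) else 0) *
      star (h.eigenvectorUnitary : Matrix (Fin d) (Fin d) ℂ)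
  else 0

/-- The conditional expectation onto the subalgebra `A_s` of `M_{2m}(ℂ)` spanned by the matrix
units `e_{ij}` with `i, j ≤ s` (`1`-based; here `0`-based: `i, j < s`) and `e_{kk}` with `k > s`. -/
def condExp19 (m : ℕ) (s : ℕ) (A : Matrix (Fin (2 * m)) (Fin (2 * m)) ℂ) :
    Matrix (Fin (2 * m)) (Fin (2 * m)) ℂ :=
  Matrix.of fun i j => if ((i : ℕ) < s ∧ (j : ℕ) < s) ∨ i = j then A i j else 0

/-- The all-ones `2m × 2m` matrix `f = ∑_{i,j} e_{ij}`. -/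
def allOnes (m : ℕ) : Matrix (Fin (2 * m)) (Fin (2 * m)) ℂ := Matrix.of fun _ _ => 1

/-- Cuculescu's projections at level `λ = 1` for the martingale `f_s = E_s(f)`:
`q 0 = 1` and `q (s+1) = χ_{(0,1]}(q_s f_{s+1} q_s)`. -/
noncomputable def cucQ (m : ℕ) : ℕ → Matrix (Fin (2 * m)) (Fin (2 * m)) ℂ
  | 0 => 1
  | s + 1 => chi01 (cucQ m s * condExp19 m (s + 1) (allOnes m) * cucQ m s)

theorem chi01_eq_cfc {d : ℕ} {M : Matrix (Fin d) (Fin d) ℂ} (hM : M.IsHermitian) :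
    chi01 M = cfc (fun x : ℝ => if 0 < x ∧ x ≤ 1 then 1 else 0) M := by
  rw [hM.cfc_eq, IsHermitian.cfc, Unitary.conjStarAlgAut_apply, chi01, dif_pos hM]
  congr 3
  ext i
  split_ifs with h <;> simp [h]

open Polynomial in
theorem chi01_eq_mul_two_sub {d : ℕ} {M : Matrix (Fin d) (Fin d) ℂ} (hM : M.IsHermitian)
    (hcubic : M * (M - 1) * (M - 2) = 0) : chi01 M = M * (2 - M) := by
  have hM' : IsSelfAdjoint M := hM
  have hcubic_cfc := cfc_polynomial (X * (X - 1) * (X - 2) : ℝ[X]) M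
  have hquad_cfc := cfc_polynomial (X * (2 - X) : ℝ[X]) M
  simp only [eval_mul, eval_sub, eval_X, eval_one, eval_ofNat, map_mul, map_sub, aeval_X,
    map_one, map_ofNat, hcubic] at hcubic_cfc hquad_cfc
  -- On `{0, 1, 2}` the indicator of `(0, 1]` agrees with `x * (2 - x)`.
  have hspec : (spectrum ℝ M).EqOn (fun x => x * (x - 1) * (x - 2)) 0 :=
    eqOn_of_cfc_eq_cfc (hcubic_cfc.trans (cfc_zero ℝ M).symm)
  rw [chi01_eq_cfc hM, ← hquad_cfc]
  refine cfc_congr fun x hx => ?_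
  have := hspec hx
  simp only [Pi.zero_apply, mul_eq_zero, sub_eq_zero] at this
  rcases this with (rfl | rfl) | rfl <;> norm_num

theorem chi01_add_of_orthogonal {d : ℕ} {P B : Matrix (Fin d) (Fin d) ℂ} (hP : P.IsHermitian)
    (hB : B.IsHermitian) (hPP : P * P = P) (hBB : B * B = 2 • B) (hPB : P * B = 0)
    (hBP : B * P = 0) : chi01 (P + B) = P := by
  have hsq : (P + B) * (P + B) = P + 2 • B := by
    rw [add_mul, mul_add, mul_add, hPP, hPB, hBP, hBB]; abel
  have hcube : (P + B) * (P + B) * (P + B) = P + 4 • B := by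
    rw [hsq, add_mul, mul_add, mul_add, smul_mul_assoc, smul_mul_assoc, hPP, hPB, hBP, hBB]
    abel
  rw [chi01_eq_mul_two_sub (hP.add hB), mul_sub, mul_two, hsq]
  · abel
  · rw [mul_sub, mul_sub, mul_one, sub_mul, sub_mul, mul_two, mul_two, hcube, hsq]
    abel

-- `tailProj n (2 * k)` is the paper's `q_{2k} = ∑_{j > 2k} e_{jj}`, with 0-based indices.
def tailProj (n t : ℕ) : Matrix (Fin n) (Fin n) ℂ :=
  diagonal fun j => if t ≤ (j : ℕ) then 1 else 0

def pairBlock (m k : ℕ) : Matrix (Fin (2 * m)) (Fin (2 * m)) ℂ :=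
  of fun i j => if (i : ℕ) / 2 = k ∧ (j : ℕ) / 2 = k then 1 else 0

theorem tailProj_isHermitian (n t : ℕ) : (tailProj n t).IsHermitian := by
  rw [tailProj, isHermitian_diagonal_iff]
  intro j
  split_ifs <;> simp

theorem tailProj_mul_self (n t : ℕ) : tailProj n t * tailProj n t = tailProj n t := by
  rw [tailProj, diagonal_mul_diagonal]
  congr 1
  ext j
  split_ifs <;> simp

theorem pairBlock_isHermitian (m k : ℕ) : (pairBlock m k).IsHermitian := by
  ext i j
  simp only [pairBlock, conjTranspose_apply, of_apply]
  split_ifs <;> simp_all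

theorem pairBlock_mul_self (m k : ℕ) : pairBlock m k * pairBlock m k = 2 • pairBlock m k := by
  ext i j
  simp only [pairBlock, mul_apply, of_apply, Matrix.smul_apply]
  by_cases hij : (i : ℕ) / 2 = k ∧ (j : ℕ) / 2 = k
  · have hk : k < m := by omega
    simp only [hij, true_and, and_true, boole_mul, ← ite_and, and_self, if_true]
    calc ∑ l : Fin (2 * m), (if (l : ℕ) / 2 = k then (1 : ℂ) else 0)
        = ∑ l ∈ Finset.range (2 * m), if l / 2 = k then (1 : ℂ) else 0 :=
          Fin.sum_univ_eq_sum_range (fun l => if l / 2 = k then (1 : ℂ) else 0) (2 * m)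
      _ = (Finset.Ico (2 * k) (2 * k + 2)).card := by
          rw [Finset.sum_boole]
          congr 2
          ext l
          simp only [Finset.mem_filter, Finset.mem_range, Finset.mem_Ico]
          omega
      _ = 2 • (1 : ℂ) := by simp
  · rw [if_neg hij, smul_zero]
    refine Finset.sum_eq_zero fun l _ => ?_
    split_ifs <;> simp_all

theorem tailProj_mul_pairBlock (m k : ℕ) : tailProj (2 * m) (2 * k + 2) * pairBlock m k = 0 := by
  ext i j
  simp only [tailProj, pairBlock, diagonal_mul, of_apply, Matrix.zero_apply]
  grind

theorem pairBlock_mul_tailProj (m k : ℕ) : pairBlock m k * tailProj (2 * m) (2 * k + 2) = 0 := by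
  ext i j
  simp only [tailProj, pairBlock, mul_diagonal, of_apply, Matrix.zero_apply]
  grind

theorem condExp19_allOnes_apply (m s : ℕ) (i j : Fin (2 * m)) :
    condExp19 m s (allOnes m) i j = if (i : ℕ) < s ∧ (j : ℕ) < s ∨ i = j then 1 else 0 := rfl

theorem tailProj_mul_condExp19_mul_tailProj_odd (m k : ℕ) :
    tailProj (2 * m) (2 * k) * condExp19 m (2 * k + 1) (allOnes m) * tailProj (2 * m) (2 * k) =
      tailProj (2 * m) (2 * k) := by
  ext i j
  simp only [tailProj, mul_diagonal, diagonal_mul, condExp19_allOnes_apply, diagonal_apply,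
    Fin.ext_iff]
  grind

theorem tailProj_mul_condExp19_mul_tailProj_even (m k : ℕ) :
    tailProj (2 * m) (2 * k) * condExp19 m (2 * k + 2) (allOnes m) * tailProj (2 * m) (2 * k) =
      tailProj (2 * m) (2 * k + 2) + pairBlock m k := by
  ext i j
  simp only [tailProj, pairBlock, Matrix.add_apply, of_apply, mul_diagonal, diagonal_mul,
    condExp19_allOnes_apply, diagonal_apply, Fin.ext_iff]
  grind

theorem cucQ_two_mul_eq_tailProj (m k : ℕ) :
    cucQ m (2 * k) = tailProj (2 * m) (2 * k) ∧ cucQ m (2 * k + 1) = tailProj (2 * m) (2 * k) := by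
  have hodd : ∀ k, cucQ m (2 * k) = tailProj (2 * m) (2 * k) →
      cucQ m (2 * k + 1) = tailProj (2 * m) (2 * k) := fun k h => by
    rw [cucQ, h, tailProj_mul_condExp19_mul_tailProj_odd]
    simpa using chi01_add_of_orthogonal (tailProj_isHermitian _ _) isHermitian_zero
      (tailProj_mul_self _ _) (by simp) (mul_zero _) (zero_mul _)
  induction k with
  | zero =>
    refine ⟨?_, hodd 0 ?_⟩ <;> simp [cucQ, tailProj]
  | succ k ih =>
    have heven : cucQ m (2 * (k + 1)) = tailProj (2 * m) (2 * (k + 1)) := by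
      rw [show 2 * (k + 1) = 2 * k + 1 + 1 by ring, cucQ, ih.2,
        tailProj_mul_condExp19_mul_tailProj_even]
      exact chi01_add_of_orthogonal (tailProj_isHermitian _ _) (pairBlock_isHermitian m k)
        (tailProj_mul_self _ _) (pairBlock_mul_self m k) (tailProj_mul_pairBlock m k)
        (pairBlock_mul_tailProj m k)
    exact ⟨heven, hodd _ heven⟩

theorem cucQ_pred_sub_cucQ (m s : ℕ) :
    cucQ m (s - 1) - cucQ m s = diagonal fun j : Fin (2 * m) =>
      if s = 2 * ((j : ℕ) / 2) + 2 then 1 else 0 := by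
  obtain ⟨k, rfl | rfl⟩ := Nat.even_or_odd' s
  · cases k with
    | zero => ext i j; simp [diagonal_apply]
    | succ k =>
      rw [show 2 * (k + 1) - 1 = 2 * k + 1 by omega, (cucQ_two_mul_eq_tailProj m k).2,
        (cucQ_two_mul_eq_tailProj m (k + 1)).1, tailProj, tailProj, diagonal_sub]
      congr 1
      ext j
      grind
  · obtain ⟨heven, hodd⟩ := cucQ_two_mul_eq_tailProj m k
    rw [Nat.add_sub_cancel, heven, hodd, sub_self]
    ext i j
    simp only [Matrix.zero_apply, diagonal_apply]
    grind

theorem sum_range_two_mul_div_two_add_two (m : ℕ) :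
    ∑ l ∈ Finset.range (2 * m), (2 * (l / 2) + 2) = 2 * m * (m + 1) := by
  induction m with
  | zero => simp
  | succ m ih =>
    rw [show 2 * (m + 1) = 2 * m + 1 + 1 by ring, Finset.sum_range_succ, Finset.sum_range_succ, ih]
    grind

noncomputable def goodPart (m : ℕ) : Matrix (Fin (2 * m)) (Fin (2 * m)) ℂ :=
  ∑ s ∈ Finset.Icc 1 (2 * m), condExp19 m s (allOnes m) * (cucQ m (s - 1) - cucQ m s)

theorem goodPart_apply (m : ℕ) (i j : Fin (2 * m)) :
    goodPart m i j = if (i : ℕ) < 2 * ((j : ℕ) / 2) + 2 then 1 else 0 := by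
  simp only [goodPart, Matrix.sum_apply, cucQ_pred_sub_cucQ, mul_diagonal,
    condExp19_allOnes_apply, mul_ite, mul_one, mul_zero, Finset.sum_ite_eq', Finset.mem_Icc]
  grind

theorem trace_conjTranspose_goodPart_mul_self (m : ℕ) :
    ((goodPart m)ᴴ * goodPart m).trace = ((2 * m * (m + 1) : ℕ) : ℂ) := by
  calc ((goodPart m)ᴴ * goodPart m).trace
      = ∑ j : Fin (2 * m), ∑ i : Fin (2 * m),
          if (i : ℕ) < 2 * ((j : ℕ) / 2) + 2 then (1 : ℂ) else 0 := by
        simp only [trace, diag_apply, mul_apply, conjTranspose_apply, goodPart_apply]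
        refine Finset.sum_congr rfl fun j _ => Finset.sum_congr rfl fun i _ => ?_
        split_ifs <;> simp
    _ = ∑ j : Fin (2 * m), ((2 * ((j : ℕ) / 2) + 2 : ℕ) : ℂ) :=
        Finset.sum_congr rfl fun j _ => by
          rw [Finset.sum_boole, Fin.card_filter_val_lt, min_eq_right (by omega)]
    _ = ((2 * m * (m + 1) : ℕ) : ℂ) := by
        rw [Fin.sum_univ_eq_sum_range (fun l => ((2 * (l / 2) + 2 : ℕ) : ℂ)), ← Nat.cast_sum,
          sum_range_two_mul_div_two_add_two]

/-- The counterexample of Appendix B.2: for the all-ones matrix `f` in `M_{2m}(ℂ)` with the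
filtration `A_s` and Cuculescu's construction at level `λ = 1`, one has `p_{2k-1} = 0` and
`p_{2k} = e_{2k-1,2k-1} + e_{2k,2k}`; consequently `‖∑_{s=1}^{2m} f_s p_s‖₂² = 2m(m+1)` while
`λ‖f‖₁ = tr f = 2m`, so the ratio `m + 1` tends to infinity with `m`. -/
theorem cuculescu_L2_counterexample (m : ℕ) :
    (∀ (k : ℕ) (hk1 : 1 ≤ k) (hk2 : k ≤ m),
      cucQ m (2 * k - 2) - cucQ m (2 * k - 1) = 0 ∧
      cucQ m (2 * k - 1) - cucQ m (2 * k) =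
        Matrix.single (⟨2 * k - 2, by omega⟩ : Fin (2 * m)) ⟨2 * k - 2, by omega⟩ 1 +
          Matrix.single (⟨2 * k - 1, by omega⟩ : Fin (2 * m)) ⟨2 * k - 1, by omega⟩ 1) ∧
    Matrix.trace
        ((∑ s ∈ Finset.Icc 1 (2 * m),
            condExp19 m s (allOnes m) * (cucQ m (s - 1) - cucQ m s))ᴴ *
          (∑ s ∈ Finset.Icc 1 (2 * m),
            condExp19 m s (allOnes m) * (cucQ m (s - 1) - cucQ m s)))
      = ((2 * m * (m + 1) : ℕ) : ℂ) ∧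
    Matrix.trace (allOnes m) = ((2 * m : ℕ) : ℂ) ∧
    Filter.Tendsto (fun m : ℕ => (m : ℝ) + 1) Filter.atTop Filter.atTop := by
  refine ⟨fun k hk1 hk2 => ?_, trace_conjTranspose_goodPart_mul_self m, by simp [trace, allOnes],
    Filter.tendsto_atTop_add_const_right _ 1 tendsto_natCast_atTop_atTop⟩
  have hodd := cucQ_pred_sub_cucQ m (2 * k - 1)
  rw [show 2 * k - 1 - 1 = 2 * k - 2 by omega] at hodd
  rw [hodd, cucQ_pred_sub_cucQ m (2 * k)]
  constructor <;> ext i j <;>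
    simp only [diagonal_apply, Matrix.add_apply, Matrix.zero_apply, single_apply, Fin.ext_iff] <;>
    grind
end
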